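/- If u and H are planar and constant states on either side of a flat interface, and H⁺ × H⁻ ≠ 0, then the strict inequality |[u] × H⁻|² + |[u] × H⁺|² < 2|H⁺ × H⁻|² implies |[u]|² < 2(|H⁺|² + |H⁻|²), where [u] := u⁺ - u⁻. -/
import Mathlib


noncomputable section

/-- The cross product on `ℝ³`. -/
def cross (u v : Fin 3 → ℝ) : Fin 3 → ℝ :=
  ![u 1 * v 2 - u 2 * v 1, u 2 * v 0 - u 0 * v 2, u 0 * v 1 - u 1 * v 0]

/-- The squared Euclidean norm `|v|²` on `ℝ³`. -/
def nsq (v : Fin 3 → ℝ) : ℝ := ∑ i, v i ^ 2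

lemma nsq_pos_of_ne_zero (v : Fin 3 → ℝ) (hv : v ≠ 0) : 0 < nsq v := by
  obtain ⟨i, hi⟩ := Function.ne_iff.mp hv
  have h2 : 0 < v i ^ 2 :=
    lt_of_le_of_ne (sq_nonneg _) (Ne.symm (pow_ne_zero 2 hi))
  exact Finset.sum_pos' (fun j _ => sq_nonneg _) ⟨i, Finset.mem_univ i, h2⟩

lemma key2 (W X cP P' M' D wc A B : ℝ)
    (e1 : cP * X = A^2 + B^2 + wc^2 * (P' + M'))
    (e2 : cP^2 * W = A^2*P' + 2*A*B*D + B^2*M' + wc^2*cP)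
    (hSOS : 0 ≤ A^2*M' + B^2*P' - 2*A*B*D)
    (e4 : P'*M' - cP = D^2)
    (hP'nn : 0 ≤ P') (hM'nn : 0 ≤ M')
    (hcP : 0 < cP) (hX2 : X < 2*cP) :
    W < 2 * (P' + M') := by
  set S := P' + M' with hSdef
  have hPM : cP ≤ P'*M' := by nlinarith [sq_nonneg D]
  have hSpos : 0 < S := by nlinarith
  have hcPS : cP ≤ S^2 := by nlinarith [sq_nonneg (P' - M')]
  have hAB : (A^2+B^2)*S = (cP*X - wc^2*S)*S := by
    have hq : A^2 + B^2 = cP*X - wc^2*S := by linarith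
    rw [hq]
  have step1 : cP^2*W ≤ (cP*X - wc^2*S)*S + wc^2*cP := by nlinarith [hSOS, hAB, e2]
  have step2 : wc^2*(cP - S^2) ≤ 0 := by nlinarith [sq_nonneg wc]
  have step3 : cP*X*S < 2*cP^2*S := by nlinarith [mul_pos hcP hSpos]
  have final : cP^2*W < cP^2*(2*S) := by nlinarith
  exact (mul_lt_mul_iff_right₀ (by positivity : (0:ℝ) < cP^2)).mp final

lemma key_scalar (w0 w1 w2 p0 p1 p2 m0 m1 m2 : ℝ)
    (hcP : 0 < (p1*m2 - p2*m1)^2 + (p2*m0 - p0*m2)^2 + (p0*m1 - p1*m0)^2)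
    (h : ((w1*m2 - w2*m1)^2 + (w2*m0 - w0*m2)^2 + (w0*m1 - w1*m0)^2)
        + ((w1*p2 - w2*p1)^2 + (w2*p0 - w0*p2)^2 + (w0*p1 - w1*p0)^2)
        < 2 * ((p1*m2 - p2*m1)^2 + (p2*m0 - p0*m2)^2 + (p0*m1 - p1*m0)^2)) :
    w0^2 + w1^2 + w2^2 < 2 * ((p0^2 + p1^2 + p2^2) + (m0^2 + m1^2 + m2^2)) := by
  have SOS : ∀ A B : ℝ,
      0 ≤ A^2*(m0^2 + m1^2 + m2^2) + B^2*(p0^2 + p1^2 + p2^2)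
        - 2*A*B*(p0*m0 + p1*m1 + p2*m2) := by
    intro A B
    have : A^2*(m0^2 + m1^2 + m2^2) + B^2*(p0^2 + p1^2 + p2^2)
        - 2*A*B*(p0*m0 + p1*m1 + p2*m2)
        = (A*m0 - B*p0)^2 + (A*m1 - B*p1)^2 + (A*m2 - B*p2)^2 := by ring
    rw [this]; positivity
  refine key2 _ _ _ _ _
    (p0*m0 + p1*m1 + p2*m2)
    (w0*(p1*m2 - p2*m1) + w1*(p2*m0 - p0*m2) + w2*(p0*m1 - p1*m0))
    ((w1*m2 - w2*m1)*(p1*m2 - p2*m1) + (w2*m0 - w0*m2)*(p2*m0 - p0*m2)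
      + (w0*m1 - w1*m0)*(p0*m1 - p1*m0))
    (-((w1*p2 - w2*p1)*(p1*m2 - p2*m1) + (w2*p0 - w0*p2)*(p2*m0 - p0*m2)
      + (w0*p1 - w1*p0)*(p0*m1 - p1*m0)))
    (by ring) (by ring) (SOS _ _) (by ring) (by positivity) (by positivity) hcP h

/-- If `H⁺ × H⁻ ≠ 0`, then the strict Syrovatskiĭ stability condition
`|[u] × H⁻|² + |[u] × H⁺|² < 2|H⁺ × H⁻|²` implies `|[u]|² < 2(|H⁺|² + |H⁻|²)`,
where `[u] := u⁺ - u⁻`. -/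
theorem strict_stability_implies_weak (up um Hp Hm : Fin 3 → ℝ)
    (hH : cross Hp Hm ≠ 0)
    (h : nsq (cross (up - um) Hm) + nsq (cross (up - um) Hp) < 2 * nsq (cross Hp Hm)) :
    nsq (up - um) < 2 * (nsq Hp + nsq Hm) := by
  have hcP := nsq_pos_of_ne_zero _ hH
  simp only [nsq, cross, Fin.sum_univ_three, Pi.sub_apply, Matrix.cons_val_zero,
    Matrix.cons_val_one, Matrix.head_cons, Matrix.cons_val_two, Matrix.tail_cons] at h hcP ⊢
  exact key_scalar (up 0 - um 0) (up 1 - um 1) (up 2 - um 2)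
    (Hp 0) (Hp 1) (Hp 2) (Hm 0) (Hm 1) (Hm 2) hcP h
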